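/- The probability that l samples drawn independently from (not necessarily identical) ε-flat distributions over a finite sample space Φ are all pairwise distinct is at least 2^(−l²ε), provided l ≤ 1 + 1/(2ε). -/

import Mathlib

/-!
Sample the coordinates one at a time. Once `j` distinct values have been drawn, an `ε`-flat
distribution puts mass at most `j ε` on them, so the next sample avoids them with probability
at least `1 - j ε`; hence the probability that all samples are distinct is at least
`∏_{j < l} (1 - j ε)`. For `0 ≤ x ≤ 1/2` convexity of `t ↦ 2 ^ t` gives `2 ^ (-2x) ≤ 1 - x`,
and `2 ∑_{j < l} j ≤ l²` turns the product into `2 ^ (-l² ε)`.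
-/

open MeasureTheory Finset Function
open scoped ENNReal

theorem Fin.sum_injective_succ {M α : Type*} [AddCommMonoid M] [Fintype α] [DecidableEq α]
    {n : ℕ} (F : (Fin (n + 1) → α) → M) :
    ∑ f : Fin (n + 1) → α with Injective f, F f =
      ∑ g : Fin n → α with Injective g, ∑ x ∈ (univ.image g)ᶜ, F (Fin.cons x g) := by
  rw [sum_filter, ← Fintype.sum_bijective (fun p : α × (Fin n → α) ↦ Fin.cons p.1 p.2)
    (Fin.consEquiv fun _ ↦ α).bijective _ _ fun _ ↦ rfl, Fintype.sum_prod_type, sum_comm,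
    sum_filter]
  refine sum_congr rfl fun g _ ↦ ?_
  by_cases hg : Injective g
  · simp only [Fin.cons_injective_iff, hg, and_true, ← sum_filter]
    congr 1; ext x; simp
  · simp [Fin.cons_injective_iff, hg]

theorem MeasureTheory.Measure.pi_toMeasure_apply_finset {ι α : Type*} [Fintype ι]
    [MeasurableSpace α] [MeasurableSingletonClass α] (P : ι → PMF α) (S : Finset (ι → α)) :
    Measure.pi (fun i ↦ (P i).toMeasure) S = ∑ f ∈ S, ∏ i, P i (f i) := by
  rw [← sum_measure_singleton]
  simp [PMF.toMeasure_apply_singleton]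

namespace PMF

variable {α : Type*} [Fintype α] [DecidableEq α] {ε : ℝ≥0∞}

theorem one_sub_card_mul_le_sum_compl (p : PMF α) (hp : ∀ a, p a ≤ ε) (s : Finset α) :
    1 - #s * ε ≤ ∑ a ∈ sᶜ, p a := by
  have hs : ∑ a ∈ s, p a ≤ #s * ε := by simpa using sum_le_card_nsmul s p ε fun a _ ↦ hp a
  have h_one : ∑ a, p a = 1 := by rw [← tsum_fintype (L := .unconditional _), p.tsum_coe]
  rw [tsub_le_iff_right, ← h_one, ← sum_add_sum_compl s p, add_comm]
  gcongr

-- Subtraction in `ℝ≥0∞` truncates at `0`, so no bound on `n ε` is needed.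
theorem prod_one_sub_mul_le_sum_injective :
    ∀ {n : ℕ} (P : Fin n → PMF α), (∀ j a, P j a ≤ ε) →
      ∏ j ∈ range n, (1 - j * ε) ≤ ∑ f : Fin n → α with Injective f, ∏ j, P j (f j)
  | 0, _, _ => by
    rw [filter_true_of_mem fun f _ ↦ Function.injective_of_subsingleton f]; simp
  | n + 1, P, hP => calc
      ∏ j ∈ range (n + 1), (1 - j * ε)
        = (∏ j ∈ range n, (1 - j * ε)) * (1 - n * ε) := prod_range_succ _ _
      _ ≤ ∑ g : Fin n → α with Injective g, (∏ j, P j.succ (g j)) * (1 - n * ε) := by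
        rw [← sum_mul]
        gcongr
        exact prod_one_sub_mul_le_sum_injective (fun j ↦ P j.succ) fun j ↦ hP j.succ
      _ ≤ ∑ g : Fin n → α with Injective g,
            (∏ j, P j.succ (g j)) * ∑ x ∈ (univ.image g)ᶜ, P 0 x := by
        gcongr with g
        calc 1 - n * ε ≤ 1 - #(univ.image g) * ε := by
              gcongr
              simpa using card_image_le (s := univ) (f := g)
          _ ≤ _ := (P 0).one_sub_card_mul_le_sum_compl (hP 0) _
      _ = ∑ f : Fin (n + 1) → α with Injective f, ∏ j, P j (f j) := by
        rw [Fin.sum_injective_succ]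
        refine sum_congr rfl fun g _ ↦ ?_
        rw [mul_comm, sum_mul]
        simp [Fin.prod_univ_succ]

end PMF

theorem two_rpow_neg_two_mul_le_one_sub {x : ℝ} (hx₀ : 0 ≤ x) (hx : x ≤ 1 / 2) :
    (2 : ℝ) ^ (-2 * x) ≤ 1 - x := by
  have h := (convexOn_rpow_left two_pos).2 (Set.mem_univ 0) (Set.mem_univ (-1))
    (show 0 ≤ 1 - 2 * x by linarith) (show 0 ≤ 2 * x by linarith) (by ring)
  norm_num [smul_eq_mul] at h
  rw [neg_mul]; linarith

theorem natCast_mul_le_of_mem_range {j l : ℕ} {ε : ℝ} (hε : 0 ≤ ε) (hj : j ∈ range l) :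
    (j : ℝ) * ε ≤ ((l : ℝ) - 1) * ε := by
  gcongr
  rw [le_sub_iff_add_le]
  exact_mod_cast mem_range.1 hj

theorem two_rpow_neg_sq_mul_le_prod_one_sub {l : ℕ} {ε : ℝ} (hε : 0 ≤ ε)
    (hl : ((l : ℝ) - 1) * ε ≤ 1 / 2) :
    (2 : ℝ) ^ (-(l : ℝ) ^ 2 * ε) ≤ ∏ j ∈ range l, (1 - j * ε) := by
  have gauss : (∑ j ∈ range l, (j : ℝ)) * 2 ≤ (l : ℝ) ^ 2 := by
    rw [← Nat.cast_sum]
    exact_mod_cast (sum_range_id_mul_two l).trans_le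
      (by rw [sq]; exact Nat.mul_le_mul_left _ (Nat.sub_le _ _))
  calc (2 : ℝ) ^ (-(l : ℝ) ^ 2 * ε) ≤ 2 ^ ∑ j ∈ range l, -2 * (j * ε) := by
        gcongr
        · norm_num
        · rw [← mul_sum, ← sum_mul]; nlinarith
    _ = ∏ j ∈ range l, (2 : ℝ) ^ (-2 * (j * ε)) := Real.rpow_sum_of_pos two_pos _ _
    _ ≤ ∏ j ∈ range l, (1 - j * ε) := by
        gcongr with j hj
        exact two_rpow_neg_two_mul_le_one_sub (by positivity)
          ((natCast_mul_le_of_mem_range hε hj).trans hl)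

theorem ENNReal.ofReal_prod_one_sub_mul {l : ℕ} {ε : ℝ} (hε : 0 ≤ ε)
    (hl : ((l : ℝ) - 1) * ε ≤ 1) :
    ENNReal.ofReal (∏ j ∈ range l, (1 - j * ε)) = ∏ j ∈ range l, (1 - j * ENNReal.ofReal ε) := by
  rw [ENNReal.ofReal_prod_of_nonneg fun j hj ↦
    sub_nonneg.2 ((natCast_mul_le_of_mem_range hε hj).trans hl)]
  refine prod_congr rfl fun j _ ↦ ?_
  rw [ENNReal.ofReal_sub _ (by positivity), ENNReal.ofReal_one,
    ENNReal.ofReal_mul (Nat.cast_nonneg j), ENNReal.ofReal_natCast]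

/-- Non-uniform, non-identically distributed birthday paradox: the probability that `l`
samples drawn independently, the `j`-th from an `ε`-flat distribution `P j` over a finite
sample space `Φ`, are all pairwise distinct is at least `2 ^ (-l² ε)`,
provided `l ≤ 1 + 1/(2ε)`. -/
theorem birthday_paradox_flat {Φ : Type*} [Fintype Φ] [MeasurableSpace Φ]
    [MeasurableSingletonClass Φ]
    (l : ℕ) (ε : ℝ) (hε : 0 < ε) (hl : (l : ℝ) ≤ 1 + 1 / (2 * ε))
    (P : Fin l → PMF Φ) (hflat : ∀ j s, P j s ≤ ENNReal.ofReal ε) :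
    ENNReal.ofReal ((2 : ℝ) ^ (-(l : ℝ) ^ 2 * ε)) ≤
      (Measure.pi fun j => (P j).toMeasure) {f | Function.Injective f} := by
  classical
  have hl' : ((l : ℝ) - 1) * ε ≤ 1 / 2 := by
    have := (le_div_iff₀ (by positivity : 0 < 2 * ε)).1 (show (l : ℝ) - 1 ≤ 1 / (2 * ε) by linarith)
    linarith
  calc ENNReal.ofReal ((2 : ℝ) ^ (-(l : ℝ) ^ 2 * ε))
      ≤ ENNReal.ofReal (∏ j ∈ range l, (1 - j * ε)) :=
        ENNReal.ofReal_le_ofReal (two_rpow_neg_sq_mul_le_prod_one_sub hε.le hl')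
    _ = ∏ j ∈ range l, (1 - j * ENNReal.ofReal ε) :=
        ENNReal.ofReal_prod_one_sub_mul hε.le (by linarith)
    _ ≤ ∑ f : Fin l → Φ with Injective f, ∏ j, P j (f j) :=
        PMF.prod_one_sub_mul_le_sum_injective P hflat
    _ = _ := by rw [← Measure.pi_toMeasure_apply_finset, coe_filter_univ]
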